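/- arXiv:2406.17344 — 3 statements merged into one kernel-verified Lean document; each statement's English description precedes it below -/
import Mathlib

section
/- Let b be a connected locally finite weighted graph over V with values in an ordered field, U ⊆ V, and π = π_U^b. For x, y ∈ U, x → y (there is a directed π-path from x to y) if and only if there exists a path x = x₀ ∼ x₁ ∼ ⋯ ∼ xₙ = y inside U with b(x_i, x_{i+1}) ≃ b(x_i) for all i = 0, …, n−1. In this case b(x_{i+1}) ≳ b(x_i) for all i and b(y) ≳ b(x). -/
open Classical
open scoped ENNReal

namespace NAG

/-- The real part of an at most finite element of an ordered field:
the supremum of the rationals below it. -/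
noncomputable def rp {K : Type*} [Field K] [LinearOrder K] [IsStrictOrderedRing K] (k : K) : ℝ :=
  sSup {r : ℝ | ∃ q : ℚ, r = (q : ℝ) ∧ (q : K) ≤ k}

/-- `k₁ ≃ k₂` : the quotient is bounded above and below by positive rationals. -/
def Comparable {K : Type*} [Field K] [LinearOrder K] [IsStrictOrderedRing K] (k₁ k₂ : K) : Prop :=
  ∃ c₁ c₂ : ℚ, 0 < c₁ ∧ 0 < c₂ ∧ (c₁ : K) < k₁ / k₂ ∧ k₁ / k₂ < (c₂ : K)

/-- `k₁ ≺≺ k₂` : the quotient is smaller than every positive rational. -/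
def MuchLT {K : Type*} [Field K] [LinearOrder K] [IsStrictOrderedRing K] (k₁ k₂ : K) : Prop :=
  ∀ c : ℚ, 0 < c → k₁ / k₂ < (c : K)

/-- `k₁ ≾ k₂` : the quotient is bounded above by some positive rational. -/
def LessSim {K : Type*} [Field K] [LinearOrder K] [IsStrictOrderedRing K] (k₁ k₂ : K) : Prop :=
  ∃ c : ℚ, 0 < c ∧ k₁ / k₂ < (c : K)

/-- A (locally finite) weighted graph over `V` with values in an ordered field `K`. -/
structure Graph (V K : Type*) [Field K] [LinearOrder K] [IsStrictOrderedRing K] where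
  w : V → V → K
  symm : ∀ x y, w x y = w y x
  nonneg : ∀ x y, 0 ≤ w x y
  loopless : ∀ x, w x x = 0
  locFin : ∀ x, {y | w x y ≠ 0}.Finite

variable {V K : Type*} [Field K] [LinearOrder K] [IsStrictOrderedRing K]

/-- `b(x) = Σ_y b(x,y)`. -/
noncomputable def Graph.deg (G : Graph V K) (x : V) : K := ∑ᶠ y, G.w x y

def Graph.Adj (G : Graph V K) (x y : V) : Prop := 0 < G.w x y

def Graph.Connected (G : Graph V K) : Prop :=
  ∀ x y : V, ∃ (n : ℕ) (p : ℕ → V), p 0 = x ∧ p n = y ∧ ∀ i < n, G.Adj (p i) (p (i + 1))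

def Graph.ConnectedOn (G : Graph V K) (S : Set V) : Prop :=
  ∀ x ∈ S, ∀ y ∈ S, ∃ (n : ℕ) (p : ℕ → V),
    p 0 = x ∧ p n = y ∧ (∀ i ≤ n, p i ∈ S) ∧ ∀ i < n, G.Adj (p i) (p (i + 1))

/-- normalized weight `p(x,y) = b(x,y)/b(x)`. -/
noncomputable def Graph.p (G : Graph V K) (x y : V) : K := G.w x y / G.deg x

/-- The real transition matrix `π_U^b`. -/
noncomputable def Graph.pi (G : Graph V K) (U : Set V) (x y : V) : ℝ :=
  if x ∈ U then rp (G.p x y) else if x = y then 1 else 0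

/-- A directed path of length `n` from `x` to `y` for a real kernel `m`. -/
def DirPath {V : Type*} (m : V → V → ℝ) (x y : V) (n : ℕ) (p : ℕ → V) : Prop :=
  p 0 = x ∧ p n = y ∧ ∀ i < n, 0 < m (p i) (p (i + 1))

/-- `x → y` : reachability by directed paths. -/
def Reaches {V : Type*} (m : V → V → ℝ) (x y : V) : Prop :=
  x = y ∨ ∃ n p, DirPath m x y n p

/-- `x ↔ y` : mutual reachability (same strongly connected component). -/
def SameSCC {V : Type*} (m : V → V → ℝ) (x y : V) : Prop :=
  Reaches m x y ∧ Reaches m y x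

/-! Outside `U` the kernel `π_U^b` only has loops, so a `π`-path that ends in `U` never leaves `U`.
Inside `U`, `π(x, y) > 0` says that the real part of `b(x,y)/b(x)` is positive, i.e. that
`b(x,y)/b(x)` exceeds a positive rational; since `b(x,y) ≤ b(x)` this is `b(x,y) ≃ b(x)`.
Along such a step `b(xᵢ₊₁) ≥ b(xᵢ, xᵢ₊₁) ≳ b(xᵢ)`, and `≳` is transitive. -/

theorem reaches_iff_exists_dirPath {m : V → V → ℝ} {x y : V} :
    Reaches m x y ↔ ∃ n p, DirPath m x y n p :=
  ⟨fun h => h.elim (fun hxy => ⟨0, fun _ => x, rfl, hxy, by simp⟩) id, Or.inr⟩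

theorem DirPath.forall_mem {m : V → V → ℝ} {U : Set V} (hm : ∀ x ∉ U, ∀ y, 0 < m x y → y = x)
    {x y : V} {n : ℕ} {p : ℕ → V} (hp : DirPath m x y n p) (hy : y ∈ U) :
    ∀ i ≤ n, p i ∈ U := by
  intro i hi
  by_contra hpi
  have stuck : ∀ k, i + k ≤ n → p (i + k) = p i := by
    intro k
    induction k with
    | zero => exact fun _ => rfl
    | succ k ih =>
      intro hk
      have hpk := ih (by omega)
      exact (hm _ (hpk ▸ hpi) _ (hp.2.2 (i + k) (by omega))).trans hpk
  have hpn : p n = p i := by simpa [Nat.add_sub_cancel' hi] using stuck (n - i) (by omega)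
  exact hpi (hpn ▸ hp.2.1 ▸ hy)

theorem rp_pos_iff {k : K} (hk : k ≤ 1) : 0 < rp k ↔ ∃ q : ℚ, 0 < q ∧ (q : K) ≤ k := by
  set S := {r : ℝ | ∃ q : ℚ, r = (q : ℝ) ∧ (q : K) ≤ k}
  have hS : BddAbove S := by
    refine ⟨1, ?_⟩
    rintro _ ⟨q, rfl, hq⟩
    exact_mod_cast (show (q : K) ≤ 1 from hq.trans hk)
  constructor
  · intro h
    have hne : S.Nonempty := Set.nonempty_iff_ne_empty.2 fun hS0 => by
      simp [rp, S, hS0] at h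
    obtain ⟨_, ⟨q, rfl, hqk⟩, hq⟩ := exists_lt_of_lt_csSup hne h
    exact ⟨q, by exact_mod_cast hq, hqk⟩
  · rintro ⟨q, hq, hqk⟩
    exact (Rat.cast_pos.2 hq).trans_le (le_csSup hS ⟨q, rfl, hqk⟩)

theorem comparable_iff_exists_rat_le {a b : K} (h : a / b ≤ 1) :
    Comparable a b ↔ ∃ q : ℚ, 0 < q ∧ (q : K) ≤ a / b := by
  constructor
  · rintro ⟨c₁, -, hc₁, -, hlt, -⟩
    exact ⟨c₁, hc₁, hlt.le⟩
  · rintro ⟨q, hq, hqab⟩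
    have hqK : (0 : K) < q := Rat.cast_pos.2 hq
    refine ⟨q / 2, 2, by positivity, two_pos, ?_, ?_⟩
    · push_cast
      linarith
    · push_cast
      linarith

theorem Comparable.div_pos {a b : K} (h : Comparable a b) : 0 < a / b := by
  obtain ⟨c₁, -, hc₁, -, hlt, -⟩ := h
  exact (Rat.cast_pos.2 hc₁).trans hlt

theorem lessSim_self (a : K) : LessSim a a := by
  refine ⟨2, two_pos, ?_⟩
  rcases eq_or_ne a 0 with rfl | ha
  · simp
  · rw [div_self ha]
    norm_num

theorem LessSim.trans {a b c : K} (hab : LessSim a b) (hbc : LessSim b c) (hb : 0 < b)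
    (hc : 0 ≤ c) : LessSim a c := by
  obtain ⟨c₁, hc₁, h₁⟩ := hab
  obtain ⟨c₂, hc₂, h₂⟩ := hbc
  refine ⟨c₁ * c₂, mul_pos hc₁ hc₂, ?_⟩
  rw [← div_mul_div_cancel₀ hb.ne', Rat.cast_mul]
  calc a / b * (b / c) ≤ c₁ * (b / c) := mul_le_mul_of_nonneg_right h₁.le (div_nonneg hb.le hc)
    _ < c₁ * c₂ := mul_lt_mul_of_pos_left h₂ (Rat.cast_pos.2 hc₁)

namespace Graph

variable (G : Graph V K)

theorem deg_nonneg (x : V) : 0 ≤ G.deg x :=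
  finsum_nonneg (G.nonneg x)

theorem w_le_deg (x y : V) : G.w x y ≤ G.deg x :=
  single_le_finsum y (G.locFin x) (G.nonneg x)

theorem p_le_one (x y : V) : G.p x y ≤ 1 :=
  div_le_one_of_le₀ (G.w_le_deg x y) (G.deg_nonneg x)

variable {G}

theorem deg_pos_of_comparable {x y : V} (h : Comparable (G.w x y) (G.deg x)) : 0 < G.deg x :=
  (G.deg_nonneg x).lt_of_ne fun h0 => by simpa [← h0] using h.div_pos

theorem deg_lessSim_of_comparable {x y : V} (h : Comparable (G.w x y) (G.deg x)) :
    LessSim (G.deg x) (G.deg y) := by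
  have hdx := deg_pos_of_comparable h
  obtain ⟨c₁, -, hc₁, -, hlt, -⟩ := h
  have hc₁K : (0 : K) < c₁ := Rat.cast_pos.2 hc₁
  have hgrow : c₁ * G.deg x < G.deg y :=
    calc c₁ * G.deg x < G.w x y := (lt_div_iff₀ hdx).1 hlt
      _ ≤ G.deg y := G.symm x y ▸ G.w_le_deg y x
  have hdy : 0 < G.deg y := (mul_pos hc₁K hdx).trans hgrow
  refine ⟨c₁⁻¹, inv_pos.2 hc₁, ?_⟩
  rw [div_lt_iff₀ hdy, Rat.cast_inv, inv_mul_eq_div, lt_div_iff₀ hc₁K]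
  linarith

theorem deg_lessSim_of_path {n : ℕ} {p : ℕ → V}
    (h : ∀ i < n, Comparable (G.w (p i) (p (i + 1))) (G.deg (p i))) :
    LessSim (G.deg (p 0)) (G.deg (p n)) := by
  induction n with
  | zero => exact lessSim_self _
  | succ n ih =>
    have hn := h n n.lt_succ_self
    exact (ih fun i hi => h i (by omega)).trans (deg_lessSim_of_comparable hn)
      (deg_pos_of_comparable hn) (G.deg_nonneg _)

theorem pi_pos_iff {U : Set V} {x : V} (hx : x ∈ U) (y : V) :
    0 < G.pi U x y ↔ Comparable (G.w x y) (G.deg x) := by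
  rw [Graph.pi, if_pos hx, rp_pos_iff (G.p_le_one x y)]
  exact (comparable_iff_exists_rat_le (G.p_le_one x y)).symm

theorem eq_of_pi_pos_of_not_mem {U : Set V} {x y : V} (hx : x ∉ U) (h : 0 < G.pi U x y) :
    y = x := by
  rw [Graph.pi, if_neg hx] at h
  split_ifs at h with hxy
  · exact hxy.symm
  · exact absurd h (lt_irrefl 0)

theorem dirPath_pi_iff {U : Set V} {x y : V} (hy : y ∈ U) {n : ℕ} {p : ℕ → V} :
    DirPath (G.pi U) x y n p ↔ p 0 = x ∧ p n = y ∧ (∀ i ≤ n, p i ∈ U) ∧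
      ∀ i < n, Comparable (G.w (p i) (p (i + 1))) (G.deg (p i)) := by
  constructor
  · intro hp
    have hU := hp.forall_mem (fun _ hx _ => eq_of_pi_pos_of_not_mem hx) hy
    exact ⟨hp.1, hp.2.1, hU, fun i hi => (pi_pos_iff (hU i hi.le) _).1 (hp.2.2 i hi)⟩
  · rintro ⟨h0, hn, hU, hc⟩
    exact ⟨h0, hn, fun i hi => (pi_pos_iff (hU i hi.le) _).2 (hc i hi)⟩

end Graph

theorem reaches_iff_path_general {V K : Type*} [Field K] [LinearOrder K] [IsStrictOrderedRing K]
    (G : Graph V K) (U : Set V) (x y : V) (hy : y ∈ U) :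
    (Reaches (G.pi U) x y ↔
      ∃ (n : ℕ) (p : ℕ → V), p 0 = x ∧ p n = y ∧ (∀ i ≤ n, p i ∈ U) ∧
        ∀ i < n, Comparable (G.w (p i) (p (i + 1))) (G.deg (p i))) ∧
    (∀ (n : ℕ) (p : ℕ → V), p 0 = x → p n = y → (∀ i ≤ n, p i ∈ U) →
      (∀ i < n, Comparable (G.w (p i) (p (i + 1))) (G.deg (p i))) →
      (∀ i < n, LessSim (G.deg (p i)) (G.deg (p (i + 1)))) ∧
        LessSim (G.deg x) (G.deg y)) := by
  refine ⟨?_, ?_⟩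
  · simp only [reaches_iff_exists_dirPath, G.dirPath_pi_iff hy]
  · rintro n p rfl rfl - hcomp
    exact ⟨fun i hi => Graph.deg_lessSim_of_comparable (hcomp i hi), Graph.deg_lessSim_of_path hcomp⟩

/-- for `x, y ∈ U`, `x → y` w.r.t. `π_U^b` iff there is a path
`x = x₀ ∼ ⋯ ∼ xₙ = y` in `U` with `b(xᵢ, xᵢ₊₁) ≃ b(xᵢ)`; in this case
`b(xᵢ₊₁) ≿ b(xᵢ)` for all `i` and `b(y) ≿ b(x)`. -/
theorem reaches_iff_path {V K : Type*} [Field K] [LinearOrder K] [IsStrictOrderedRing K] [Countable V]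
    (G : Graph V K) (hconn : G.Connected) (hdeg : ∀ x, 0 < G.deg x)
    (U : Set V) (x y : V) (hx : x ∈ U) (hy : y ∈ U) :
    (Reaches (G.pi U) x y ↔
      ∃ (n : ℕ) (p : ℕ → V), p 0 = x ∧ p n = y ∧ (∀ i ≤ n, p i ∈ U) ∧
        ∀ i < n, Comparable (G.w (p i) (p (i + 1))) (G.deg (p i))) ∧
    (∀ (n : ℕ) (p : ℕ → V), p 0 = x → p n = y → (∀ i ≤ n, p i ∈ U) →
      (∀ i < n, Comparable (G.w (p i) (p (i + 1))) (G.deg (p i))) →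
      (∀ i < n, LessSim (G.deg (p i)) (G.deg (p (i + 1)))) ∧
        LessSim (G.deg x) (G.deg y)) :=
  reaches_iff_path_general G U x y hy

end NAG
end

section
/- Let π be a transition matrix over a finite set V with π(x,x) = 0 for every non-absorbing state x. Then there exists a non-Archimedean ordered field K, a weighted graph b over V with values in K, and U ⊆ V such that π = π_U^b if and only if there is a function β : V → ℝ⁺ such that π(x,y)β(x) = π(y,x)β(y) for all x, y in the same irreducible class. -/
open Classical
open scoped ENNReal

namespace NAG

variable {V K : Type*} [Field K] [LinearOrder K] [IsStrictOrderedRing K]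

/-- A realization of a transition matrix `π` over `V` as the real transition
matrix `π_U^b` of a weighted graph `b` over a non-Archimedean ordered field. -/
structure NARealization (V : Type*) (π : V → V → ℝ) where
  K : Type
  [inst : Field K]
  [instLO : LinearOrder K]
  [instSOR : IsStrictOrderedRing K]
  τ : K
  τpos : 0 < τ
  τsmall : ∀ n : ℕ, 0 < n → τ < 1 / (n : K)
  G : Graph V K
  U : Set V
  agrees : ∀ x y, Graph.pi G U x y = π x y


/-!
The real part `rp` is the standard part `ArchimedeanClass.stdPart`.

If `π = π_U^b` and `π(x,y) > 0`, then `b(x,y)` is of the order of `b(x)`, and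
`b(y) ≥ b(y,x) = b(x,y)`; so `b(y)` is at least of the order of `b(x)`, and all `b(x)` in an
irreducible class are of one order. Fixing `r` in the class of `x`, `β(x) = st(b(x)/b(r))` is a
positive real, and `π(x,y)β(x) = st(b(x,y)/b(r))` is symmetric in `x` and `y`.

Conversely, let `d` be a depth of the irreducible classes that strictly decreases along every edge
leaving a class, and put `b(x,y) = max(β(x)π(x,y), β(y)π(y,x)) ε^max(d x, d y)` over the
hyperreals. The edges from `x` to classes of larger depth have weight infinitesimal compared with
`b(x) ≈ β(x) ε^(d x)`, and on the other edges `b(x,y) = β(x)π(x,y) ε^(d x)`: inside a class by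
balance, and towards classes of smaller depth because there `π(y,x) = 0`.
-/

open ArchimedeanClass

section StandardPart

theorem rp_eq_stdPart (k : K) : rp k = stdPart k := by
  rcases le_or_gt 0 (mk k) with hk | hk
  · obtain ⟨n, hn⟩ := exists_int_le_of_mk_nonneg hk
    refine IsLUB.csSup_eq ⟨?_, fun r hr => ?_⟩ ⟨n, n, by simp, by exact_mod_cast hn⟩
    · rintro _ ⟨q, rfl, hq⟩
      simpa using stdPart_monotoneOn (mk_ratCast_nonneg q) hk hq
    · by_contra! hlt
      obtain ⟨q, hrq, hqk⟩ := exists_rat_btwn hlt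
      have hq : (q : K) ≤ k := by
        by_contra! hkq
        exact hqk.not_ge (by simpa using stdPart_monotoneOn hk (mk_ratCast_nonneg q) hkq.le)
      exact hrq.not_ge (hr ⟨q, rfl, hq⟩)
  · rw [stdPart_of_mk_ne_zero hk.ne]
    have hq (q : ℚ) : mk k < mk (q : K) := hk.trans_le (mk_ratCast_nonneg q)
    rcases le_or_gt 0 k with h0 | h0
    · refine Real.sSup_of_not_bddAbove ?_
      rintro ⟨B, hB⟩
      obtain ⟨q, hBq⟩ := exists_rat_gt B
      exact hBq.not_ge (hB ⟨q, rfl, (lt_of_mk_lt_mk_of_nonneg (hq q) h0).le⟩)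
    · rw [rp, ← Real.sSup_empty]
      congr
      refine Set.eq_empty_of_forall_notMem ?_
      rintro _ ⟨q, -, hqk⟩
      exact hqk.not_gt (lt_of_mk_lt_mk_of_nonpos (hq q) h0.le)

theorem mk_sum_nonneg {ι : Type*} (s : Finset ι) {f : ι → K} (hf : ∀ i ∈ s, 0 ≤ mk (f i)) :
    0 ≤ mk (∑ i ∈ s, f i) :=
  Finset.sum_induction f (fun k => 0 ≤ mk k)
    (fun a b ha hb => (le_min ha hb).trans (min_le_mk_add a b)) (by simp) hf

theorem stdPart_sum {ι : Type*} (s : Finset ι) {f : ι → K} (hf : ∀ i ∈ s, 0 ≤ mk (f i)) :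
    stdPart (∑ i ∈ s, f i) = ∑ i ∈ s, stdPart (f i) := by
  induction s using Finset.cons_induction with
  | empty => simp
  | cons i s hi ih =>
    rw [Finset.forall_mem_cons] at hf
    rw [Finset.sum_cons, Finset.sum_cons, stdPart_add hf.1 (mk_sum_nonneg s hf.2), ih hf.2]

theorem stdPart_pos_of_mk_eq_zero {k : K} (h0 : 0 ≤ k) (hk : mk k = 0) : 0 < stdPart k :=
  (stdPart_nonneg h0).lt_of_ne' (by rwa [Ne, stdPart_eq_zero, not_not])

theorem mk_div_eq_zero_of_mk_eq {a b : K} (hb : b ≠ 0) (h : mk a = mk b) : mk (a / b) = 0 := by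
  rw [div_eq_mul_inv, mk_mul, h, ← mk_mul, mul_inv_cancel₀ hb, mk_one]

end StandardPart

section Reachability

variable {m : V → V → ℝ} {x y z : V}

theorem exists_dirPath_of_reaches (h : Reaches m x y) : ∃ n p, DirPath m x y n p := by
  rcases h with rfl | h
  · exact ⟨0, fun _ => x, rfl, rfl, by simp⟩
  · exact h

theorem reaches_iff_reflTransGen :
    Reaches m x y ↔ Relation.ReflTransGen (fun a b => 0 < m a b) x y := by
  constructor
  · rintro (rfl | ⟨n, p, rfl, rfl, hp⟩)
    · exact .refl
    have (i : ℕ) (hi : i ≤ n) : Relation.ReflTransGen (fun a b => 0 < m a b) (p 0) (p i) := by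
      induction i with
      | zero => exact .refl
      | succ i ih => exact (ih (by omega)).tail (hp i (by omega))
    exact this n le_rfl
  · intro h
    induction h using Relation.ReflTransGen.head_induction_on with
    | refl => exact Or.inl rfl
    | head hab _ ih =>
      obtain ⟨n, p, hp0, hpn, hp⟩ := exists_dirPath_of_reaches ih
      refine Or.inr ⟨n + 1, fun | 0 => _ | i + 1 => p i, rfl, hpn, ?_⟩
      rintro (_ | i) hi
      · simpa [hp0] using hab
      · exact hp i (by omega)

theorem reaches_of_pos (h : 0 < m x y) : Reaches m x y :=
  reaches_iff_reflTransGen.2 (.single h)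

theorem Reaches.trans (hxy : Reaches m x y) (hyz : Reaches m y z) : Reaches m x z :=
  reaches_iff_reflTransGen.2
    ((reaches_iff_reflTransGen.1 hxy).trans (reaches_iff_reflTransGen.1 hyz))

theorem sameSCC_equivalence : Equivalence (SameSCC m) where
  refl _ := ⟨Or.inl rfl, Or.inl rfl⟩
  symm h := ⟨h.2, h.1⟩
  trans h₁ h₂ := ⟨h₁.1.trans h₂.1, h₂.2.trans h₁.2⟩

theorem eq_of_reaches_of_forall_ne (hx : ∀ z ≠ x, m x z ≤ 0) (h : Reaches m x y) : y = x := by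
  rw [reaches_iff_reflTransGen] at h
  induction h with
  | refl => rfl
  | tail _ hbc ih =>
    subst ih
    by_contra hne
    exact (hx _ hne).not_gt hbc

theorem exists_depth [Finite V] (m : V → V → ℝ) :
    ∃ d : V → ℕ, ∀ x y, Reaches m x y → d y ≤ d x ∧ (d y = d x → Reaches m y x) := by
  let below (x : V) : Set V := {z | Reaches m x z ∧ ¬Reaches m z x}
  refine ⟨fun x => (below x).ncard, fun x y hxy => ?_⟩
  have hsub : below y ⊆ below x := fun z hz =>
    ⟨hxy.trans hz.1, fun hzx => hz.2 (hzx.trans hxy)⟩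
  refine ⟨Set.ncard_le_ncard hsub, fun heq => ?_⟩
  by_contra hyx
  have := Set.eq_of_subset_of_ncard_le hsub heq.ge ▸ (show y ∈ below x from ⟨hxy, hyx⟩)
  exact this.2 (Or.inl rfl)

end Reachability

section Realization

variable (G : Graph V K) {U : Set V} {x y : V}

theorem Graph.pi_of_mem (hx : x ∈ U) (y : V) : G.pi U x y = stdPart (G.p x y) := by
  simp [Graph.pi, hx, rp_eq_stdPart]

theorem Graph.pi_of_notMem (hx : x ∉ U) (y : V) : G.pi U x y = if x = y then 1 else 0 := by
  simp [Graph.pi, hx]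

theorem Graph.mem_of_sameSCC_of_ne (h : SameSCC (G.pi U) x y) (hne : x ≠ y) : x ∈ U := by
  by_contra hx
  refine hne (eq_of_reaches_of_forall_ne (fun z hz => ?_) h.1).symm
  simp [G.pi_of_notMem hx, hz.symm]

variable [Fintype V]

theorem Graph.deg_eq_sum (x : V) : G.deg x = ∑ y, G.w x y := finsum_eq_sum_of_fintype _

theorem Graph.w_le_deg_s13 (x y : V) : G.w x y ≤ G.deg x := by
  rw [G.deg_eq_sum]
  exact Finset.single_le_sum (fun z _ => G.nonneg x z) (Finset.mem_univ y)

theorem Graph.deg_nonneg_s13 (x : V) : 0 ≤ G.deg x := (G.nonneg x x).trans (G.w_le_deg_s13 x x)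

theorem Graph.deg_pos_of_mem (hrow : ∑ y, G.pi U x y = 1) (hx : x ∈ U) : 0 < G.deg x := by
  refine (G.deg_nonneg_s13 x).lt_of_ne' fun h0 => ?_
  simp [G.pi_of_mem hx, Graph.p, h0] at hrow

theorem mk_p_nonneg : 0 ≤ mk (G.p x y) := by
  have hp : 0 ≤ G.p x y := div_nonneg (G.nonneg x y) (G.deg_nonneg_s13 x)
  simpa using mk_antitoneOn hp zero_le_one (div_le_one_of_le₀ (G.w_le_deg_s13 x y) (G.deg_nonneg_s13 x))

theorem mk_deg_le_of_pi_pos (h : 0 < G.pi U x y) : mk (G.deg y) ≤ mk (G.deg x) := by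
  by_cases hx : x ∈ U
  · rw [G.pi_of_mem hx] at h
    have hdeg : G.deg x ≠ 0 := fun h0 => by simp [Graph.p, h0] at h
    have hp : mk (G.p x y) ≤ 0 := not_lt.1 fun hp => h.ne' (stdPart_of_mk_ne_zero hp.ne')
    calc mk (G.deg y) ≤ mk (G.w y x) :=
          mk_antitoneOn (G.nonneg y x) (G.deg_nonneg_s13 y) (G.w_le_deg_s13 y x)
      _ = mk (G.p x y) + mk (G.deg x) := by
          rw [G.symm, ← mk_mul, Graph.p, div_mul_cancel₀ _ hdeg]
      _ ≤ mk (G.deg x) := add_le_of_nonpos_left hp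
  · rw [G.pi_of_notMem hx] at h
    obtain rfl : x = y := by by_contra hne; simp [hne] at h
    exact le_rfl

theorem mk_deg_le_of_reaches (h : Reaches (G.pi U) x y) : mk (G.deg y) ≤ mk (G.deg x) := by
  rw [reaches_iff_reflTransGen] at h
  induction h with
  | refl => exact le_rfl
  | tail _ hbc ih => exact (mk_deg_le_of_pi_pos G hbc).trans ih

theorem mk_deg_eq_of_sameSCC (h : SameSCC (G.pi U) x y) : mk (G.deg x) = mk (G.deg y) :=
  le_antisymm (mk_deg_le_of_reaches G h.2) (mk_deg_le_of_reaches G h.1)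

theorem stdPart_p_mul_stdPart_deg_div {c : K} (hx : G.deg x ≠ 0) (hc : 0 ≤ mk (G.deg x / c)) :
    stdPart (G.p x y) * stdPart (G.deg x / c) = stdPart (G.w x y / c) := by
  rw [← stdPart_mul (mk_p_nonneg G) hc, Graph.p, div_mul_div_cancel₀ hx]

theorem exists_reversible_weights (hrow : ∀ x, ∑ y, G.pi U x y = 1) :
    ∃ β : V → ℝ, (∀ x, 0 < β x) ∧
      ∀ x y, SameSCC (G.pi U) x y → G.pi U x y * β x = G.pi U y x * β y := by
  let s : Setoid V := ⟨SameSCC (G.pi U), sameSCC_equivalence⟩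
  let r (x : V) : V := (Quotient.mk s x).out
  have hr (x : V) : SameSCC (G.pi U) (r x) x := Quotient.mk_out (s := s) x
  have hrU {x : V} (hx : x ∈ U) : r x ∈ U := by
    by_cases h : r x = x
    · rwa [h]
    · exact G.mem_of_sameSCC_of_ne (hr x) h
  have hmk {x : V} (hx : x ∈ U) : mk (G.deg x / G.deg (r x)) = 0 :=
    mk_div_eq_zero_of_mk_eq (G.deg_pos_of_mem (hrow _) (hrU hx)).ne'
      (mk_deg_eq_of_sameSCC G (hr x)).symm
  refine ⟨fun x => if x ∈ U then stdPart (G.deg x / G.deg (r x)) else 1, fun x => ?_,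
    fun x y hxy => ?_⟩
  · dsimp only
    split_ifs with hx
    · exact stdPart_pos_of_mk_eq_zero (div_nonneg (G.deg_nonneg_s13 _) (G.deg_nonneg_s13 _)) (hmk hx)
    · exact one_pos
  · obtain rfl | hne := eq_or_ne x y
    · rfl
    have hx := G.mem_of_sameSCC_of_ne hxy hne
    have hy := G.mem_of_sameSCC_of_ne (sameSCC_equivalence.symm hxy) hne.symm
    have hry : r y = r x := congrArg Quotient.out (Quotient.sound (sameSCC_equivalence.symm hxy))
    simp only [if_pos hx, if_pos hy, G.pi_of_mem hx, G.pi_of_mem hy, hry]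
    rw [stdPart_p_mul_stdPart_deg_div G (G.deg_pos_of_mem (hrow x) hx).ne' (hmk hx).ge,
      stdPart_p_mul_stdPart_deg_div G (G.deg_pos_of_mem (hrow y) hy).ne' (hry ▸ (hmk hy).ge),
      G.symm]

end Realization

section Reversible

noncomputable def Graph.maxSymm [Finite V] (a : V → V → ℝ) (ha : ∀ x y, 0 ≤ a x y) :
    Graph V ℝ where
  w x y := if x = y then 0 else max (a x y) (a y x)
  symm x y := by
    by_cases h : x = y
    · rw [h]
    · rw [if_neg h, if_neg (Ne.symm h), max_comm]
  nonneg x y := by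
    split_ifs
    exacts [le_rfl, le_max_of_le_left (ha x y)]
  loopless _ := if_pos rfl
  locFin _ := Set.toFinite _

/-- The coefficient of `ε ^ d x` in the weight of `xy` in `c.layered d`. -/
def Graph.leadCoeff (c : Graph V ℝ) (d : V → ℕ) (x y : V) : ℝ :=
  if d y ≤ d x then c.w x y else 0

variable [Finite V] {π : V → V → ℝ} (hπ : ∀ x y, 0 ≤ π x y) {β : V → ℝ} (hβ : ∀ x, 0 < β x)
  {d : V → ℕ}

theorem Graph.leadCoeff_maxSymm (hbal : ∀ x y, SameSCC π x y → π x y * β x = π y x * β y)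
    (hd : ∀ x y, Reaches π x y → d y ≤ d x ∧ (d y = d x → Reaches π y x))
    {x : V} (hx : π x x = 0) (y : V) :
    (Graph.maxSymm (fun x y => β x * π x y) fun x y => mul_nonneg (hβ x).le (hπ x y)).leadCoeff d
      x y = β x * π x y := by
  obtain rfl | hne := eq_or_ne x y
  · simp [Graph.leadCoeff, Graph.maxSymm, hx]
  simp only [Graph.leadCoeff, Graph.maxSymm, if_neg hne]
  split_ifs with hdy
  · refine max_eq_left ?_
    rcases (hπ y x).eq_or_lt with h0 | hpos
    · rw [← h0, mul_zero]
      exact mul_nonneg (hβ x).le (hπ x y)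
    · obtain ⟨hle, hreach⟩ := hd y x (reaches_of_pos hpos)
      have hxy := hreach (le_antisymm hle hdy)
      linarith [hbal x y ⟨hxy, reaches_of_pos hpos⟩]
  · have : π x y = 0 := by
      by_contra h
      exact hdy (hd x y (reaches_of_pos ((hπ x y).lt_of_ne' h))).1
    simp [this]

end Reversible

theorem eq_zero_of_diag_eq_one [Fintype V] {π : V → V → ℝ} (hπ : ∀ x y, 0 ≤ π x y) {x : V}
    (hrow : ∑ y, π x y = 1) (hx : π x x = 1) {y : V} (hy : y ≠ x) : π x y = 0 := by
  rw [← Finset.add_sum_erase _ _ (Finset.mem_univ x), hx, add_eq_left] at hrow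
  exact (Finset.sum_eq_zero_iff_of_nonneg fun z _ => hπ x z).1 hrow y (by simp [hy])

section Hyperreal

open Hyperreal

theorem mk_coe_mul_epsilon_pow_pos (r : ℝ) {n : ℕ} (hn : n ≠ 0) : 0 < mk ((r : ℝ*) * ε ^ n) := by
  rw [mk_mul, mk_pow]
  exact (nsmul_pos archimedeanClassMk_epsilon_pos hn).trans_le
    (le_add_of_nonneg_left (archimedeanClassMk_coe_nonneg r))

noncomputable def Graph.layered [Finite V] (c : Graph V ℝ) (d : V → ℕ) : Graph V ℝ* where
  w x y := (c.w x y : ℝ*) * ε ^ max (d x) (d y)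
  symm x y := by rw [c.symm, max_comm]
  nonneg x y := mul_nonneg (coe_nonneg.2 (c.nonneg x y)) (pow_nonneg epsilon_pos.le _)
  loopless x := by simp [c.loopless]
  locFin _ := Set.toFinite _

section Layered

variable [Finite V] (c : Graph V ℝ) (d : V → ℕ) (x y : V)

theorem layered_w_div_epsilon_pow :
    (c.layered d).w x y / ε ^ d x = c.w x y * ε ^ (max (d x) (d y) - d x) := by
  rw [div_eq_iff (pow_ne_zero _ epsilon_pos.ne'), mul_assoc, ← pow_add,
    Nat.sub_add_cancel (le_max_left _ _)]
  rfl

theorem mk_layered_w_div_epsilon_pow_nonneg : 0 ≤ mk ((c.layered d).w x y / ε ^ d x) := by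
  rw [layered_w_div_epsilon_pow]
  by_cases hdy : d y ≤ d x
  · simp [hdy]
  · exact (mk_coe_mul_epsilon_pow_pos (c.w x y) (by omega)).le

theorem stdPart_layered_w_div_epsilon_pow :
    stdPart ((c.layered d).w x y / ε ^ d x) = c.leadCoeff d x y := by
  rw [layered_w_div_epsilon_pow, Graph.leadCoeff]
  split_ifs with hdy
  · simp [hdy]
  · exact stdPart_of_mk_ne_zero (mk_coe_mul_epsilon_pow_pos (c.w x y) (by omega)).ne'

end Layered

variable [Fintype V]

theorem stdPart_layered_p (c : Graph V ℝ) (d : V → ℕ) (x y : V)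
    (hsum : ∑ z, c.leadCoeff d x z ≠ 0) :
    stdPart ((c.layered d).p x y) = c.leadCoeff d x y / ∑ z, c.leadCoeff d x z := by
  set G := c.layered d
  have hfin (z : V) := mk_layered_w_div_epsilon_pow_nonneg c d x z
  have hdeg : stdPart (G.deg x / ε ^ d x) = ∑ z, c.leadCoeff d x z := by
    rw [G.deg_eq_sum, Finset.sum_div, stdPart_sum _ fun z _ => hfin z]
    exact Finset.sum_congr rfl fun z _ => stdPart_layered_w_div_epsilon_pow c d x z
  have hmk : mk (G.deg x / ε ^ d x) = 0 := by
    refine le_antisymm (not_lt.1 fun h => hsum (hdeg ▸ stdPart_of_mk_ne_zero h.ne')) ?_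
    rw [G.deg_eq_sum, Finset.sum_div]
    exact mk_sum_nonneg _ fun z _ => hfin z
  rw [Graph.p, ← div_div_div_cancel_right₀ (pow_ne_zero _ epsilon_pos.ne'),
    stdPart_div (hfin y) (by simp [hmk]), stdPart_layered_w_div_epsilon_pow, hdeg]

theorem nonempty_realization_of_reversible (π : V → V → ℝ) (hπ : ∀ x y, 0 ≤ π x y)
    (hrow : ∀ x, ∑ y, π x y = 1) (hdiag : ∀ x, π x x ≠ 1 → π x x = 0)
    (β : V → ℝ) (hβ : ∀ x, 0 < β x)
    (hbal : ∀ x y, SameSCC π x y → π x y * β x = π y x * β y) :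
    Nonempty (NARealization V π) := by
  obtain ⟨d, hd⟩ := exists_depth π
  let c := Graph.maxSymm (fun x y => β x * π x y) fun x y => mul_nonneg (hβ x).le (hπ x y)
  refine ⟨⟨ℝ*, ε, epsilon_pos, fun n hn => ?_, c.layered d, {x | π x x ≠ 1}, fun x y => ?_⟩⟩
  · have h := epsilon_lt_of_pos (r := 1 / n) (by positivity)
    rwa [coe_div, coe_one, show ((n : ℝ) : ℝ*) = n from map_natCast coeRingHom n] at h
  by_cases hx : π x x = 1
  · have hU : x ∉ {x | π x x ≠ 1} := not_not.2 hx
    rw [Graph.pi, if_neg hU]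
    split_ifs with h
    · rw [← h, hx]
    · exact (eq_zero_of_diag_eq_one hπ (hrow x) hx (Ne.symm h)).symm
  have hlead := Graph.leadCoeff_maxSymm hπ hβ hbal hd (hdiag x hx)
  have hsum : ∑ z, c.leadCoeff d x z = β x := by
    simp [c, hlead, ← Finset.mul_sum, hrow]
  have hU : x ∈ {x | π x x ≠ 1} := hx
  rw [Graph.pi, if_pos hU, rp_eq_stdPart, stdPart_layered_p c d x y (hsum ▸ (hβ x).ne'), hsum,
    hlead, mul_div_cancel_left₀ _ (hβ x).ne']

end Hyperreal

/-- a transition matrix `π` over a finite set `V` with `π(x,x) = 0`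
for every non-absorbing state arises as `π_U^b` for a weighted graph `b` over a
non-Archimedean ordered field iff there is `β : V → ℝ⁺` with
`π(x,y)β(x) = π(y,x)β(y)` on each irreducible class. -/
theorem realization_iff_reversible {V : Type*} [Fintype V] (π : V → V → ℝ)
    (hrange : ∀ x y, 0 ≤ π x y ∧ π x y ≤ 1)
    (hrow : ∀ x, ∑ y, π x y = 1)
    (hdiag : ∀ x, π x x ≠ 1 → π x x = 0) :
    Nonempty (NARealization V π) ↔
      ∃ β : V → ℝ, (∀ x, 0 < β x) ∧
        ∀ x y, SameSCC π x y → π x y * β x = π y x * β y := by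
  constructor
  · rintro ⟨⟨K, τ, -, -, G, U, hagrees⟩⟩
    obtain rfl : G.pi U = π := funext₂ hagrees
    exact exists_reversible_weights G hrow
  · rintro ⟨β, hβ, hbal⟩
    exact nonempty_realization_of_reversible π (fun x y => (hrange x y).1) hrow hdiag β hβ hbal

end NAG
end

section
/- Let b be a connected locally finite weighted graph over V with values in an ordered field, K ⊆ V finite connected, a ∈ K, and v the solution of the Dirichlet problem for K and a. If x ∈ V satisfies b(x) ≻≻ b(a), then the real part ρ∘v is constant on the irreducible class containing x. -/
/-!
By the minimum principle `v ≥ 0`, so the energy identity bounds every edge term at `x ∈ K`: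
`b(x,y) (v(x) - v(y))² ≤ 2 b(a)`. A step `x → y` of `π_K^b` with `x ∈ K` has
`b(x,y) ≥ q b(x)` for a rational `q > 0`; hence `b(y) ≥ q b(x) ≻≻ b(a)` and
`(v(x) - v(y))² ≤ 2 b(a) / (q b(x))` is infinitesimal, so `ρ(v(x)) = ρ(v(y))`.
Steps outside `K` are loops, so both facts propagate along every path leaving `x`.
-/

open Classical
open scoped ENNReal

namespace NAG

variable {V K : Type*} [Field K] [LinearOrder K] [IsStrictOrderedRing K]

/-- The Laplacian `Δf(x) = (1/b(x)) Σ_y b(x,y)(f(x) − f(y))`. -/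
noncomputable def Graph.lap (G : Graph V K) (f : V → K) (x : V) : K :=
  (∑ᶠ y, G.w x y * (f x - f y)) / G.deg x

/-- `v` solves the Dirichlet problem for the finite set `S` and `a ∈ S`. -/
def Graph.IsDirichletSol (G : Graph V K) (S : Finset V) (a : V) (v : V → K) : Prop :=
  v a = 1 ∧ (∀ x ∈ S, x ≠ a → G.lap v x = 0) ∧ ∀ x ∉ S, v x = 0

theorem Real.sSup_le_sSup_of_forall_exists_lt_add {A B : Set ℝ} (hA : A.Nonempty)
    (hB : BddAbove B) (h : ∀ a ∈ A, ∀ ε > 0, ∃ b ∈ B, a < b + ε) : sSup A ≤ sSup B := by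
  refine le_of_forall_pos_le_add fun ε hε => csSup_le hA fun a ha => ?_
  obtain ⟨b, hb, hab⟩ := h a ha ε hε
  linarith [le_csSup hB hb]

theorem Real.sSup_eq_sSup_of_forall_exists_lt_add {A B : Set ℝ}
    (hAB : ∀ a ∈ A, ∀ ε > 0, ∃ b ∈ B, a < b + ε) (hBA : ∀ b ∈ B, ∀ ε > 0, ∃ a ∈ A, b < a + ε) :
    sSup A = sSup B := by
  have nonempty_iff : A.Nonempty ↔ B.Nonempty :=
    ⟨fun ⟨a, ha⟩ => (hAB a ha 1 one_pos).imp fun _ => And.left,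
      fun ⟨b, hb⟩ => (hBA b hb 1 one_pos).imp fun _ => And.left⟩
  have bddAbove_of {X Y : Set ℝ} (hXY : ∀ x ∈ X, ∀ ε > 0, ∃ y ∈ Y, x < y + ε) :
      BddAbove Y → BddAbove X := fun ⟨M, hM⟩ => ⟨M + 1, fun x hx => by
    obtain ⟨y, hy, hxy⟩ := hXY x hx 1 one_pos
    linarith [hM hy]⟩
  rcases A.eq_empty_or_nonempty with rfl | hA
  · rw [Set.not_nonempty_iff_eq_empty.1 (nonempty_iff.not.1 Set.not_nonempty_empty)]
  by_cases hAb : BddAbove A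
  · have hBb : BddAbove B := bddAbove_of hBA hAb
    exact le_antisymm (Real.sSup_le_sSup_of_forall_exists_lt_add hA hBb hAB)
      (Real.sSup_le_sSup_of_forall_exists_lt_add (nonempty_iff.1 hA) hAb hBA)
  · rw [Real.sSup_of_not_bddAbove hAb, Real.sSup_of_not_bddAbove (mt (bddAbove_of hAB) hAb)]

-- No finiteness is needed: for infinite `k₁, k₂` both sides are the junk value `0`.
theorem rp_eq_of_forall_abs_sub_lt {k₁ k₂ : K} (h : ∀ ε : ℚ, 0 < ε → |k₁ - k₂| < ε) :
    rp k₁ = rp k₂ := by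
  have shift {k k' : K} (hkk' : ∀ ε : ℚ, 0 < ε → k ≤ k' + ε) :
      ∀ r ∈ {r : ℝ | ∃ q : ℚ, r = q ∧ (q : K) ≤ k}, ∀ ε > 0,
        ∃ s ∈ {r : ℝ | ∃ q : ℚ, r = q ∧ (q : K) ≤ k'}, r < s + ε := by
    rintro _ ⟨q, rfl, hq⟩ ε hε
    obtain ⟨δ, hδ, hδε⟩ := exists_rat_btwn hε
    refine ⟨(q - δ : ℚ), ⟨q - δ, rfl, ?_⟩, by push_cast; linarith⟩
    have := hkk' δ (by exact_mod_cast hδ)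
    push_cast
    linarith
  refine Real.sSup_eq_sSup_of_forall_exists_lt_add (shift fun ε hε => ?_) (shift fun ε hε => ?_)
  · linarith [(abs_lt.1 (h ε hε)).2]
  · linarith [(abs_lt.1 (h ε hε)).1]

theorem exists_rat_le_of_rp_pos {k : K} (h : 0 < rp k) : ∃ q : ℚ, 0 < q ∧ (q : K) ≤ k := by
  have hne : {r : ℝ | ∃ q : ℚ, r = q ∧ (q : K) ≤ k}.Nonempty := by
    by_contra hc
    rw [Set.not_nonempty_iff_eq_empty] at hc
    rw [rp, hc, Real.sSup_empty] at h
    exact lt_irrefl _ h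
  obtain ⟨_, ⟨q, rfl, hq⟩, hr⟩ := exists_lt_of_lt_csSup hne h
  exact ⟨q, by exact_mod_cast hr, hq⟩

theorem MuchLT.of_rat_mul_le {k k₁ k₂ : K} (h : MuchLT k k₁) (hk₁ : 0 < k₁) {q : ℚ} (hq : 0 < q)
    (hle : (q : K) * k₁ ≤ k₂) : MuchLT k k₂ := by
  intro c hc
  have hqK : (0 : K) < q := by exact_mod_cast hq
  have hcK : (0 : K) < c := by exact_mod_cast hc
  have hk₂ : 0 < k₂ := lt_of_lt_of_le (mul_pos hqK hk₁) hle
  have := h (q * c) (mul_pos hq hc)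
  rw [div_lt_iff₀ hk₁] at this
  rw [div_lt_iff₀ hk₂]
  push_cast at this
  nlinarith

theorem Finset.sum_sum_mul_sub_sq_eq_two_mul {ι R : Type*} [CommRing R] (T : Finset ι)
    (w : ι → ι → R) (hw : ∀ x y, w x y = w y x) (f : ι → R) :
    ∑ x ∈ T, ∑ y ∈ T, w x y * (f x - f y) ^ 2 = 2 * ∑ x ∈ T, f x * ∑ y ∈ T, w x y * (f x - f y) := by
  have swap : ∑ x ∈ T, ∑ y ∈ T, w x y * (f x - f y) * f y
      = -∑ x ∈ T, ∑ y ∈ T, w x y * (f x - f y) * f x := by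
    rw [Finset.sum_comm, ← Finset.sum_neg_distrib]
    refine Finset.sum_congr rfl fun x _ => ?_
    rw [← Finset.sum_neg_distrib]
    exact Finset.sum_congr rfl fun y _ => by rw [hw]; ring
  calc ∑ x ∈ T, ∑ y ∈ T, w x y * (f x - f y) ^ 2
      = ∑ x ∈ T, ∑ y ∈ T, w x y * (f x - f y) * f x
        - ∑ x ∈ T, ∑ y ∈ T, w x y * (f x - f y) * f y := by
        simp only [← Finset.sum_sub_distrib]; ring_nf
    _ = 2 * ∑ x ∈ T, ∑ y ∈ T, w x y * (f x - f y) * f x := by rw [swap]; ring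
    _ = 2 * ∑ x ∈ T, f x * ∑ y ∈ T, w x y * (f x - f y) := by
        congr 1
        exact Finset.sum_congr rfl fun x _ => by
          rw [Finset.mul_sum]; exact Finset.sum_congr rfl fun y _ => by ring

namespace Graph

variable (G : Graph V K)

noncomputable def nbrs (x : V) : Finset V := (G.locFin x).toFinset

theorem mem_nbrs {x y : V} : y ∈ G.nbrs x ↔ G.w x y ≠ 0 := Set.Finite.mem_toFinset _

theorem finsum_w_mul_eq_sum {x : V} {T : Finset V} (hT : G.nbrs x ⊆ T) (h : V → K) :
    ∑ᶠ y, G.w x y * h y = ∑ y ∈ T, G.w x y * h y :=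
  finsum_eq_sum_of_support_subset _ fun _ hy =>
    hT ((G.mem_nbrs).2 (Function.support_mul_subset_left _ _ hy))

theorem deg_eq_sum_s16 {x : V} {T : Finset V} (hT : G.nbrs x ⊆ T) : G.deg x = ∑ y ∈ T, G.w x y := by
  simpa [deg] using G.finsum_w_mul_eq_sum hT 1

theorem deg_mul_lap {x : V} (hx : 0 < G.deg x) {T : Finset V} (hT : G.nbrs x ⊆ T) (f : V → K) :
    G.deg x * G.lap f x = ∑ y ∈ T, G.w x y * (f x - f y) := by
  rw [lap, mul_div_cancel₀ _ hx.ne', G.finsum_w_mul_eq_sum hT]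

theorem eq_of_lap_eq_zero_of_forall_le {f : V → K} {x y : V} (hx : 0 < G.deg x)
    (hlap : G.lap f x = 0) (hmin : ∀ z, f x ≤ f z) (hxy : G.w x y ≠ 0) : f y = f x := by
  have hsum := G.deg_mul_lap hx subset_rfl f
  rw [hlap, mul_zero, eq_comm] at hsum
  have hterm := (Finset.sum_eq_zero_iff_of_nonpos fun z _ =>
    mul_nonpos_of_nonneg_of_nonpos (G.nonneg x z) (sub_nonpos.2 (hmin z))).1 hsum y
    (G.mem_nbrs.2 hxy)
  exact (sub_eq_zero.1 ((mul_eq_zero.1 hterm).resolve_left hxy)).symm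

end Graph

namespace Graph.IsDirichletSol

variable {G : Graph V K} {S : Finset V} {a : V} {v : V → K}

theorem nonneg (hdeg : ∀ x, 0 < G.deg x) (hS : G.ConnectedOn ↑S) (ha : a ∈ S)
    (hv : G.IsDirichletSol S a v) (x : V) : 0 ≤ v x := by
  obtain ⟨hva, hlap, hout⟩ := hv
  obtain ⟨x₀, hx₀S, hx₀⟩ := S.exists_min_image v ⟨a, ha⟩
  suffices h : 0 ≤ v x₀ by
    by_cases hx : x ∈ S
    · exact h.trans (hx₀ x hx)
    · exact (hout x hx).ge
  by_contra! hneg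
  have hmin : ∀ z, v x₀ ≤ v z := fun z => by
    by_cases hz : z ∈ S
    · exact hx₀ z hz
    · rw [hout z hz]; exact hneg.le
  obtain ⟨n, p, hp0, hpn, hpS, hadj⟩ := hS x₀ hx₀S a ha
  have hpath : ∀ i ≤ n, v (p i) = v x₀ := by
    intro i
    induction i with
    | zero => intro _; rw [hp0]
    | succ i ih =>
      intro hi
      have hvi := ih (by omega)
      have hia : p i ≠ a := fun h => by rw [h, hva] at hvi; linarith
      exact (G.eq_of_lap_eq_zero_of_forall_le (hdeg _) (hlap _ (hpS i (by omega)) hia)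
        (hvi ▸ hmin) (ne_of_gt (hadj i (by omega)))).trans hvi
  have := hpath n le_rfl
  rw [hpn, hva] at this
  linarith

-- The energy identity: the left side is `2 Q(v) = 2 cap_K(a) ≤ 2 b(a)`.
theorem sum_sum_w_mul_sub_sq_le (hdeg : ∀ x, 0 < G.deg x) (ha : a ∈ S)
    (hv : G.IsDirichletSol S a v) (hv0 : ∀ x, 0 ≤ v x) {T : Finset V} (hST : S ⊆ T)
    (hT : ∀ s ∈ S, G.nbrs s ⊆ T) :
    ∑ x ∈ T, ∑ y ∈ T, G.w x y * (v x - v y) ^ 2 ≤ 2 * G.deg a := by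
  obtain ⟨hva, hlap, hout⟩ := hv
  have flux_eq_zero : ∀ x ∈ T, x ≠ a → v x * ∑ y ∈ T, G.w x y * (v x - v y) = 0 := by
    intro x _ hxa
    by_cases hxS : x ∈ S
    · rw [← G.deg_mul_lap (hdeg x) (hT x hxS), hlap x hxS hxa, mul_zero, mul_zero]
    · rw [hout x hxS, zero_mul]
  have flux_le : ∑ y ∈ T, G.w a y * (1 - v y) ≤ G.deg a := by
    rw [G.deg_eq_sum_s16 (hT a ha)]
    exact Finset.sum_le_sum fun y _ =>
      mul_le_of_le_one_right (G.nonneg a y) (by linarith [hv0 y])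
  rw [Finset.sum_sum_mul_sub_sq_eq_two_mul T G.w G.symm,
    Finset.sum_eq_single_of_mem a (hST ha) flux_eq_zero, hva, one_mul]
  linarith

theorem w_mul_sub_sq_le (hdeg : ∀ x, 0 < G.deg x) (ha : a ∈ S) (hv : G.IsDirichletSol S a v)
    (hv0 : ∀ x, 0 ≤ v x) {x : V} (hx : x ∈ S) (y : V) :
    G.w x y * (v x - v y) ^ 2 ≤ 2 * G.deg a := by
  -- `y` is inserted so that the edge term appears in the sum even when `b(x,y) = 0`.
  set T := insert y (S ∪ S.biUnion G.nbrs)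
  have hST : S ⊆ T := Finset.subset_union_left.trans (Finset.subset_insert _ _)
  have hT : ∀ s ∈ S, G.nbrs s ⊆ T := fun s hs =>
    ((Finset.subset_biUnion_of_mem _ hs).trans Finset.subset_union_right).trans
      (Finset.subset_insert _ _)
  have hterm : ∀ s z, 0 ≤ G.w s z * (v s - v z) ^ 2 := fun s z =>
    mul_nonneg (G.nonneg s z) (sq_nonneg _)
  calc G.w x y * (v x - v y) ^ 2 ≤ ∑ z ∈ T, G.w x z * (v x - v z) ^ 2 :=
        Finset.single_le_sum (fun z _ => hterm x z) (Finset.mem_insert_self _ _)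
    _ ≤ ∑ s ∈ T, ∑ z ∈ T, G.w s z * (v s - v z) ^ 2 :=
        Finset.single_le_sum (fun s _ => Finset.sum_nonneg fun z _ => hterm s z) (hST hx)
    _ ≤ 2 * G.deg a := hv.sum_sum_w_mul_sub_sq_le hdeg ha hv0 hST hT

theorem muchLT_deg_and_rp_eq_of_pi_pos (hdeg : ∀ x, 0 < G.deg x) (ha : a ∈ S)
    (hv : G.IsDirichletSol S a v) (hv0 : ∀ x, 0 ≤ v x) {x y : V}
    (hx : MuchLT (G.deg a) (G.deg x)) (hxy : 0 < G.pi ↑S x y) :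
    MuchLT (G.deg a) (G.deg y) ∧ rp (v x) = rp (v y) := by
  unfold Graph.pi at hxy
  split_ifs at hxy with hxS hxy'
  · obtain ⟨q, hq, hqp⟩ := exists_rat_le_of_rp_pos hxy
    have hw : (q : K) * G.deg x ≤ G.w x y := (le_div_iff₀ (hdeg x)).1 hqp
    refine ⟨hx.of_rat_mul_le (hdeg x) hq (hw.trans ((G.symm x y).trans_le (G.w_le_deg y x))),
      rp_eq_of_forall_abs_sub_lt fun ε hε => abs_lt_of_sq_lt_sq ?_ (by positivity)⟩
    have henergy := hv.w_mul_sub_sq_le hdeg ha hv0 hxS y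
    have hsmall := hx (q * ε ^ 2 / 2) (by positivity)
    rw [div_lt_iff₀ (hdeg x)] at hsmall
    push_cast at hsmall
    have hqdeg : 0 < (q : K) * G.deg x := mul_pos (by exact_mod_cast hq) (hdeg x)
    nlinarith [mul_le_mul_of_nonneg_right hw (sq_nonneg (v x - v y))]
  · subst hxy'
    exact ⟨hx, rfl⟩
  · exact (lt_irrefl _ hxy).elim

end Graph.IsDirichletSol

theorem Reaches.induction_on {m : V → V → ℝ} {P : V → Prop} {x y : V} (h : Reaches m x y)
    (hx : P x) (hstep : ∀ x y, P x → 0 < m x y → P y) : P y := by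
  rcases h with rfl | ⟨n, p, rfl, rfl, hp⟩
  · exact hx
  · induction n with
    | zero => exact hx
    | succ n ih => exact hstep _ _ (ih fun i hi => hp i (by omega)) (hp n (by omega))

theorem realPart_constant_on_class_general {V K : Type*} [Field K] [LinearOrder K] [IsStrictOrderedRing K]
    (G : Graph V K) (hdeg : ∀ x, 0 < G.deg x)
    (S : Finset V) (hS : G.ConnectedOn ↑S) (a : V) (ha : a ∈ S)
    (v : V → K) (hv : G.IsDirichletSol S a v)
    (x : V) (hx : MuchLT (G.deg a) (G.deg x)) :
    ∀ y z : V, SameSCC (G.pi ↑S) x y → SameSCC (G.pi ↑S) x z →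
      rp (v y) = rp (v z) := by
  intro y z hy hz
  have hv0 := hv.nonneg hdeg hS ha
  have hreach : ∀ y, Reaches (G.pi ↑S) x y → rp (v y) = rp (v x) := fun y hxy =>
    (hxy.induction_on (P := fun y => MuchLT (G.deg a) (G.deg y) ∧ rp (v y) = rp (v x))
      ⟨hx, rfl⟩ fun y z ⟨hy, hyx⟩ hyz =>
        have ⟨hz, hyz'⟩ := hv.muchLT_deg_and_rp_eq_of_pi_pos hdeg ha hv0 hy hyz
        ⟨hz, hyz'.symm.trans hyx⟩).2
  rw [hreach y hy.1, hreach z hz.1]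

/-- if `v` solves the Dirichlet problem for finite connected `K`
and `a ∈ K`, and `b(x) ≻≻ b(a)`, then `ρ ∘ v` is constant on the irreducible
class containing `x`. -/
theorem realPart_constant_on_class {V K : Type*} [Field K] [LinearOrder K] [IsStrictOrderedRing K] [Countable V]
    (G : Graph V K) (hconn : G.Connected) (hdeg : ∀ x, 0 < G.deg x)
    (S : Finset V) (hS : G.ConnectedOn ↑S) (a : V) (ha : a ∈ S)
    (v : V → K) (hv : G.IsDirichletSol S a v)
    (x : V) (hx : MuchLT (G.deg a) (G.deg x)) :
    ∀ y z : V, SameSCC (G.pi ↑S) x y → SameSCC (G.pi ↑S) x z →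
      rp (v y) = rp (v z) :=
  realPart_constant_on_class_general G hdeg S hS a ha v hv x hx

end NAG
end
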